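/- Let R be a ring. Then R is semiprime and right endoartinian if and only if R is a semisimple ring. -/

import Mathlib

/-- A module `M` over a ring `S` is *endoartinian* if every descending chain of images of
module endomorphisms of `M` stabilizes.  (A right `R`-module is treated as a module over
`Rᵐᵒᵖ`.) -/
def IsEndoartinian (S M : Type*) [Ring S] [AddCommGroup M] [Module S M] : Prop :=
  ∀ f : ℕ → M →ₗ[S] M,
    (∀ n, LinearMap.range (f (n + 1)) ≤ LinearMap.range (f n)) →
    ∃ n, ∀ k, n ≤ k → LinearMap.range (f k) = LinearMap.range (f n)

/-!
Since `aR` is the image of left multiplication by `a`, a right endoartinian ring has DCC on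
principal right ideals. By Brauer's lemma (Schur's lemma applied to left multiplication by a
suitable `x ∈ I`), every minimal right ideal `I` of a semiprime ring contains a nonzero
idempotent. To see that `1` lies in the socle, take `x` with `1 - x` in the socle and `xR`
minimal; if `x ≠ 0`, a nonzero idempotent `e ∈ xR` inside a minimal right ideal gives
`x - ex`, still congruent to `1` modulo the socle, with `(x - ex)R < xR` because
`e (x - ex) = 0`. Conversely, a semisimple ring is artinian as a cyclic right module, and if
`aRa = 0` then writing `1 = ac + y` along `R = aR ⊕ C` gives `a = ya ∈ C`, so `a = 0`.
-/

open MulOpposite Submodule LinearMap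

section Module

variable {S M : Type*} [Ring S] [AddCommGroup M] [Module S M]

theorem IsArtinian.isEndoartinian [IsArtinian S M] : IsEndoartinian S M := fun _ hf ↦
  (WellFoundedLT.antitone_chain_condition (antitone_nat_of_succ_le hf)).imp
    fun _ hn k hk ↦ (hn k hk).symm

theorem IsEndoartinian.wellFounded_range_lt (h : IsEndoartinian S M) :
    WellFounded fun f g : M →ₗ[S] M ↦ range f < range g := by
  rw [RelEmbedding.wellFounded_iff_isEmpty]
  refine ⟨fun f ↦ ?_⟩
  obtain ⟨n, hn⟩ := h f fun n ↦ (f.map_rel_iff.2 n.lt_succ_self).le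
  exact (f.map_rel_iff.2 n.lt_succ_self).ne (hn (n + 1) n.le_succ)

theorem Submodule.exists_isAtom_le_span_singleton
    (hwf : WellFounded fun x y : M ↦ span S {x} < span S {y}) {a : M} (ha : a ≠ 0) :
    ∃ I : Submodule S M, IsAtom I ∧ I ≤ span S {a} := by
  obtain ⟨m, ⟨hm0, hma⟩, hmin⟩ :=
    hwf.has_min {m | m ≠ 0 ∧ span S {m} ≤ span S {a}} ⟨a, ha, le_rfl⟩
  refine ⟨span S {m}, ⟨by simpa using hm0, fun I hI ↦ ?_⟩, hma⟩
  by_contra hI0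
  obtain ⟨b, hbI, hb0⟩ := I.exists_mem_ne_zero_of_ne_bot hI0
  have hbm : span S {b} < span S {m} := ((span_singleton_le_iff_mem b I).2 hbI).trans_lt hI
  exact hmin b ⟨hb0, hbm.le.trans hma⟩ hbm

end Module

section Ring

variable {R : Type*} [Ring R]

theorem Submodule.mul_mem_op {I : Submodule Rᵐᵒᵖ R} {x : R} (hx : x ∈ I) (r : R) :
    x * r ∈ I :=
  I.smul_mem (op r) hx

theorem Submodule.eq_top_of_one_mem_op {I : Submodule Rᵐᵒᵖ R} (h : (1 : R) ∈ I) : I = ⊤ :=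
  eq_top_iff'.2 fun x ↦ by simpa using I.mul_mem_op h x

theorem LinearMap.range_mulLeft_op (a : R) : range (mulLeft Rᵐᵒᵖ a) = span Rᵐᵒᵖ {a} := by
  ext x
  simp [mem_span_singleton, MulOpposite.smul_eq_mul_unop]

theorem IsEndoartinian.wellFounded_span_singleton_lt (h : IsEndoartinian Rᵐᵒᵖ R) :
    WellFounded fun a b : R ↦ span Rᵐᵒᵖ {a} < span Rᵐᵒᵖ {b} := by
  simp_rw [← range_mulLeft_op]
  exact InvImage.wf (mulLeft Rᵐᵒᵖ) h.wellFounded_range_lt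

theorem exists_isIdempotentElem_mem_of_isAtom
    (hsp : ∀ a : R, (∀ r : R, a * r * a = 0) → a = 0) {I : Submodule Rᵐᵒᵖ R} (hI : IsAtom I) :
    ∃ e ∈ I, e ≠ 0 ∧ IsIdempotentElem e := by
  obtain ⟨m, hmI, hm0⟩ := I.exists_mem_ne_zero_of_ne_bot hI.1
  obtain ⟨r, hr⟩ : ∃ r, m * r * m ≠ 0 := by
    by_contra! h
    exact hm0 (hsp m h)
  have hx : m * r ∈ I := I.mul_mem_op hmI r
  have : IsSimpleModule Rᵐᵒᵖ I := isSimpleModule_iff_isAtom.2 hI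
  let φ : I →ₗ[Rᵐᵒᵖ] I := (mulLeft Rᵐᵒᵖ (m * r)).restrict fun y _ ↦ I.mul_mem_op hx y
  have hφ : Function.Bijective φ := LinearMap.bijective_of_ne_zero fun h ↦
    hr (congrArg Subtype.val (LinearMap.congr_fun h ⟨m, hmI⟩))
  obtain ⟨⟨e, heI⟩, he⟩ := hφ.2 ⟨m * r, hx⟩
  have hxe : m * r * e = m * r := congrArg Subtype.val he
  refine ⟨e, heI, ?_, ?_⟩
  · rintro rfl
    have hx0 : m * r = 0 := by simpa [eq_comm] using hxe
    exact hr (by rw [hx0, zero_mul])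
  · refine congrArg Subtype.val (hφ.1 (a₁ := ⟨e * e, I.mul_mem_op heI e⟩) (a₂ := ⟨e, heI⟩) ?_)
    ext
    simp [φ, ← mul_assoc, hxe]

theorem span_singleton_sub_mul_lt {e x : R} (he : IsIdempotentElem e) (he0 : e ≠ 0)
    (hex : e ∈ span Rᵐᵒᵖ {x}) : span Rᵐᵒᵖ {x - e * x} < span Rᵐᵒᵖ {x} := by
  refine lt_of_le_not_ge ((span_singleton_le_iff_mem _ _).2 ?_) fun hle ↦ he0 ?_
  · exact sub_mem (mem_span_singleton_self x) (mul_mem_op hex x)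
  · obtain ⟨s, hs⟩ := mem_span_singleton.1 (hle hex)
    calc e = e * e := he.symm
      _ = e * (s • (x - e * x)) := by rw [hs]
      _ = e * (x - e * x) * s.unop := by rw [smul_eq_mul_unop, mul_assoc]
      _ = 0 := by rw [mul_sub, ← mul_assoc, he, sub_self, zero_mul]

theorem isSemisimpleModule_op_of_wellFounded
    (hsp : ∀ a : R, (∀ r : R, a * r * a = 0) → a = 0)
    (hwf : WellFounded fun a b : R ↦ span Rᵐᵒᵖ {a} < span Rᵐᵒᵖ {b}) :
    IsSemisimpleModule Rᵐᵒᵖ R := by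
  set soc := sSup {I : Submodule Rᵐᵒᵖ R | IsAtom I}
  suffices h1 : (1 : R) ∈ soc from (isSemisimpleModule_iff _ _).2 <|
    complementedLattice_of_sSup_atoms_eq_top (eq_top_of_one_mem_op h1)
  obtain ⟨x, hx, hmin⟩ := hwf.has_min {x | 1 - x ∈ soc} ⟨1, by simp⟩
  rcases eq_or_ne x 0 with rfl | hx0
  · simpa using hx
  obtain ⟨I, hI, hIx⟩ := exists_isAtom_le_span_singleton hwf hx0
  obtain ⟨e, heI, he0, he⟩ := exists_isIdempotentElem_mem_of_isAtom hsp hI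
  refine (hmin (x - e * x) ?_ (span_singleton_sub_mul_lt he he0 (hIx heI))).elim
  have hex : e * x ∈ soc := soc.mul_mem_op (le_sSup (s := {I | IsAtom I}) hI heI) x
  have : 1 - (x - e * x) = (1 - x) + e * x := by abel
  simpa [this] using add_mem hx hex

theorem eq_zero_of_forall_mul_mul_eq_zero [IsSemisimpleModule Rᵐᵒᵖ R] {a : R}
    (h : ∀ r, a * r * a = 0) : a = 0 := by
  obtain ⟨q, hq⟩ := exists_isCompl (span Rᵐᵒᵖ {a})
  obtain ⟨_, hx, y, hy, hxy⟩ := mem_sup.1 (hq.sup_eq_top ▸ mem_top : (1 : R) ∈ _)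
  obtain ⟨c, rfl⟩ := mem_span_singleton.1 hx
  have hya : y * a = a := calc
    y * a = (c • a + y) * a := by rw [add_mul, smul_eq_mul_unop, h, zero_add]
    _ = a := by rw [hxy, one_mul]
  have haq : a ∈ q := hya ▸ q.mul_mem_op hy a
  simpa [hq.inf_eq_bot] using mem_inf.2 ⟨mem_span_singleton_self a, haq⟩

instance Module.Finite.op_self : Module.Finite Rᵐᵒᵖ R :=
  ⟨⟨{1}, eq_top_of_one_mem_op (subset_span (by simp))⟩⟩

end Ring

/-- A ring is semiprime and right endoartinian iff it is semisimple (as a right module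
over itself). -/
theorem semiprime_isEndoartinian_iff_semisimple (R : Type*) [Ring R] :
    ((∀ a : R, (∀ r : R, a * r * a = 0) → a = 0) ∧ IsEndoartinian Rᵐᵒᵖ R) ↔
      IsSemisimpleModule Rᵐᵒᵖ R :=
  ⟨fun ⟨hsp, hA⟩ ↦ isSemisimpleModule_op_of_wellFounded hsp hA.wellFounded_span_singleton_lt,
    fun _ ↦ ⟨fun _ ↦ eq_zero_of_forall_mul_mul_eq_zero, IsArtinian.isEndoartinian⟩⟩
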